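/- arXiv:1904.02376 — 2 statements merged into one kernel-verified Lean document; each statement's English description precedes it below -/
import Mathlib

section
/- Let a be a graded strongly π-regular homogeneous element of a G-graded ring R with decomposition a = f + u (f homogeneous idempotent, u homogeneous unit, fa = af, faf nilpotent). Then a is graded strongly nil clean if and only if 2f − 1 + u is nilpotent and u ∈ R_e. -/
/-! The idempotent of a strongly π-regular decomposition `a = f + u` is determined by `a`: it is
the unique idempotent `p` commuting with `a` such that `a * p` is nilpotent and `a - p` is a unit.
A strongly nil clean decomposition `a = e + b` produces such an idempotent, namely `1 - e`; hence
`f = 1 - e`, `2f - 1 + u = b` and `u = (2e - 1) + b`. Homogeneous idempotents lie in `C 1`, so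
`2e - 1 ∈ C 1`; if neither `u` nor `b` had degree `1`, the `C 1`-component `2e - 1` of `u`
would vanish and `u = b` would be a nilpotent unit. -/

/-- A `G`-grading of a ring `R`: a family of additive subgroups `C g` with
`C g * C h ⊆ C (g*h)`, `1 ∈ C e`, and `R = ⊕_g C g` (internal direct sum). -/
structure Grading (G : Type*) [Group G] [DecidableEq G] (R : Type*) [Ring R] where
  C : G → AddSubgroup R
  one_mem : (1 : R) ∈ C 1
  mul_mem : ∀ {g h : G} {a b : R}, a ∈ C g → b ∈ C h → a * b ∈ C (g * h)
  isInternal : DirectSum.IsInternal C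

namespace Grading

variable {G : Type*} [Group G] [DecidableEq G] {R : Type*} [Ring R]

/-- An element is homogeneous if it lies in some component. -/
def Homogeneous (A : Grading G R) (a : R) : Prop := ∃ g, a ∈ A.C g

/-- A homogeneous element is graded nil clean if it is the sum of a homogeneous
idempotent and a homogeneous nilpotent. -/
def IsGradedNilClean (A : Grading G R) (a : R) : Prop :=
  ∃ f b : R, A.Homogeneous f ∧ IsIdempotentElem f ∧ A.Homogeneous b ∧
    IsNilpotent b ∧ a = f + b

/-- A graded ring is graded nil clean if every homogeneous element is. -/
def GradedNilClean (A : Grading G R) : Prop :=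
  ∀ a : R, A.Homogeneous a → A.IsGradedNilClean a

/-- Graded strongly nil clean element: the idempotent and nilpotent commute. -/
def IsGradedStronglyNilClean (A : Grading G R) (a : R) : Prop :=
  ∃ f b : R, A.Homogeneous f ∧ IsIdempotentElem f ∧ A.Homogeneous b ∧
    IsNilpotent b ∧ f * b = b * f ∧ a = f + b

def GradedStronglyNilClean (A : Grading G R) : Prop :=
  ∀ a : R, A.Homogeneous a → A.IsGradedStronglyNilClean a

end Grading

section Ring

variable {R : Type*} [Ring R] {a p q : R}

theorem IsIdempotentElem.exists_pow_mul_eq_zero (hq : IsIdempotentElem q) (haq : Commute a q)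
    (h : IsNilpotent (a * q)) : ∃ N, a ^ N * q = 0 := by
  obtain ⟨N, hN⟩ := h
  refine ⟨N + 1, ?_⟩
  rw [← hq.pow_succ_eq N, ← haq.mul_pow, pow_succ, hN, zero_mul]

theorem IsIdempotentElem.pow_mul_one_sub (hp : IsIdempotentElem p) (hap : Commute a p) (n : ℕ) :
    a ^ n * (1 - p) = (a - p) ^ n * (1 - p) := by
  have hstep : a * (1 - p) = (a - p) * (1 - p) := by
    rw [sub_mul (a := a), hp.mul_one_sub_self, sub_zero]
  induction n with
  | zero => simp
  | succ n ih =>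
    have hc : Commute a (a - p) := (Commute.refl a).sub_right hap
    rw [pow_succ', mul_assoc, ih, ← mul_assoc, (hc.pow_right n).eq, mul_assoc, hstep,
      ← mul_assoc, ← pow_succ]

/-- Multiplication by `a` is invertible on `(1 - p)R` and nilpotent on `qR`, so these meet
trivially. -/
theorem IsIdempotentElem.one_sub_mul_eq_zero (hp : IsIdempotentElem p) (hq : IsIdempotentElem q)
    (hap : Commute a p) (haq : Commute a q) (hu : IsUnit (a - p)) (hn : IsNilpotent (a * q)) :
    (1 - p) * q = 0 ∧ q * (1 - p) = 0 := by
  obtain ⟨N, hN⟩ := hq.exists_pow_mul_eq_zero haq hn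
  have hpow := hp.pow_mul_one_sub hap N
  have hp' : Commute (1 - p) (a ^ N) := ((Commute.one_left a).sub_left hap.symm).pow_right N
  have hvp : Commute ((a - p) ^ N) (1 - p) :=
    (Commute.one_right _).sub_right ((hap.sub_left (Commute.refl p)).pow_left N)
  constructor
  · rw [← (hu.pow N).mul_right_eq_zero]
    calc (a - p) ^ N * ((1 - p) * q) = a ^ N * (1 - p) * q := by rw [hpow, mul_assoc]
      _ = (1 - p) * (a ^ N * q) := by rw [← hp'.eq, mul_assoc]
      _ = 0 := by rw [hN, mul_zero]
  · rw [← (hu.pow N).mul_left_eq_zero]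
    calc q * (1 - p) * (a - p) ^ N = q * a ^ N * (1 - p) := by
          rw [mul_assoc, ← hvp.eq, ← hpow, mul_assoc]
      _ = 0 := by rw [← (haq.pow_left N).eq, hN, zero_mul]

theorem IsIdempotentElem.eq_of_isNilpotent_mul_of_isUnit_sub (hp : IsIdempotentElem p)
    (hq : IsIdempotentElem q) (hap : Commute a p) (haq : Commute a q) (hnp : IsNilpotent (a * p))
    (hnq : IsNilpotent (a * q)) (hup : IsUnit (a - p)) (huq : IsUnit (a - q)) : p = q := by
  obtain ⟨hpq, hqp⟩ := hp.one_sub_mul_eq_zero hq hap haq hup hnq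
  obtain ⟨hqp', hpq'⟩ := hq.one_sub_mul_eq_zero hp haq hap huq hnp
  rw [sub_mul, one_mul, sub_eq_zero] at hpq hqp'
  rw [mul_sub, mul_one, sub_eq_zero] at hqp hpq'
  rw [hpq', ← hpq]

theorem IsIdempotentElem.isUnit_two_mul_sub_one_add {e b : R} (he : IsIdempotentElem e)
    (hb : IsNilpotent b) (heb : Commute e b) : IsUnit (2 * e - 1 + b) := by
  have hsq : (2 * e - 1) * (2 * e - 1) = 1 := by
    linear_combination (norm := noncomm_ring) 4 * he.eq
  exact hb.isUnit_add_left_of_commute (isUnit_iff_exists.mpr ⟨_, hsq, hsq⟩)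
    (((Commute.ofNat_right b 2).mul_right heb.symm).sub_right (Commute.one_right b))

theorem IsIdempotentElem.eq_one_sub_of_isNilpotent_mul_of_isUnit_sub {e b : R}
    (he : IsIdempotentElem e) (hb : IsNilpotent b) (heb : Commute e b) (hp : IsIdempotentElem p)
    (hap : Commute (e + b) p) (hnp : IsNilpotent ((e + b) * p)) (hup : IsUnit (e + b - p)) :
    p = 1 - e := by
  have hbe : Commute b (1 - e) := (Commute.one_right b).sub_right heb.symm
  have hae : Commute (e + b) (1 - e) :=
    ((Commute.one_right e).sub_right (Commute.refl e)).add_left hbe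
  have hne : (e + b) * (1 - e) = b * (1 - e) := by
    rw [add_mul, he.mul_one_sub_self, zero_add]
  refine hp.eq_of_isNilpotent_mul_of_isUnit_sub he.one_sub hap hae hnp ?_ hup ?_
  · rw [hne]
    exact hbe.isNilpotent_mul_right hb
  · convert he.isUnit_two_mul_sub_one_add hb heb using 1
    noncomm_ring

end Ring

namespace Grading

variable {G : Type*} [Group G] [DecidableEq G] {R : Type*} [Ring R] (A : Grading G R)

theorem eq_zero_of_mem_of_mem {g h : G} (hgh : g ≠ h) {x : R} (hg : x ∈ A.C g)
    (hh : x ∈ A.C h) : x = 0 := by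
  let _ : DirectSum.Decomposition A.C := A.isInternal.chooseDecomposition
  rw [← DirectSum.decompose_of_mem_same A.C hh, DirectSum.decompose_of_mem_ne A.C hg hgh]

theorem eq_zero_of_add_mem {i j k : G} (hij : i ≠ j) (hik : i ≠ k) {x y : R} (hx : x ∈ A.C i)
    (hy : y ∈ A.C j) (hxy : x + y ∈ A.C k) : x = 0 := by
  let _ : DirectSum.Decomposition A.C := A.isInternal.chooseDecomposition
  have h := DirectSum.decompose_of_mem_ne A.C hxy hik.symm
  rwa [DirectSum.decompose_add, DirectSum.add_apply, AddSubgroup.coe_add,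
    DirectSum.decompose_of_mem_same A.C hx, DirectSum.decompose_of_mem_ne A.C hy hij.symm,
    add_zero] at h

theorem mem_one_of_isIdempotentElem {f : R} (hf : A.Homogeneous f) (hfi : IsIdempotentElem f) :
    f ∈ A.C 1 := by
  obtain ⟨g, hg⟩ := hf
  by_cases h : g = 1
  · exact h ▸ hg
  · have hgg : f ∈ A.C (g * g) := hfi.eq ▸ A.mul_mem hg hg
    rw [A.eq_zero_of_mem_of_mem (by simpa using h) hg hgg]
    exact zero_mem _

theorem two_mul_sub_one_mem_one {e : R} (he : e ∈ A.C 1) : 2 * e - 1 ∈ A.C 1 := by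
  rw [two_mul]
  exact sub_mem (add_mem he he) A.one_mem

theorem mem_one_of_isUnit_of_eq_add {u x b : R} (hu : A.Homogeneous u) (huu : IsUnit u)
    (hx : x ∈ A.C 1) (hb : A.Homogeneous b) (hbn : IsNilpotent b) (hux : u = x + b) :
    u ∈ A.C 1 := by
  obtain ⟨h, huh⟩ := hu
  obtain ⟨g, hbg⟩ := hb
  by_cases hg : g = 1
  · exact hux ▸ add_mem hx (hg ▸ hbg)
  by_cases hh : h = 1
  · exact hh ▸ huh
  have hub : u = b := by
    rw [hux, A.eq_zero_of_add_mem (Ne.symm hg) (Ne.symm hh) hx hbg (hux ▸ huh), zero_add]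
  rcases subsingleton_or_nontrivial R with _ | _
  · exact Subsingleton.elim u 0 ▸ zero_mem _
  · exact absurd (hub ▸ hbn) huu.not_isNilpotent

end Grading

theorem stmt8_general {G : Type*} [Group G] [DecidableEq G] {R : Type*} [Ring R]
    (A : Grading G R) (a f u : R)
    (hf : A.Homogeneous f) (hfi : IsIdempotentElem f)
    (hu : A.Homogeneous u) (huu : IsUnit u)
    (hdec : a = f + u) (hc : f * a = a * f) (hn : IsNilpotent (f * a * f)) :
    A.IsGradedStronglyNilClean a ↔
      (IsNilpotent (2 * f - 1 + u) ∧ u ∈ A.C 1) := by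
  have hfu : Commute f u := by
    simpa [hdec] using Commute.sub_right hc (Commute.refl f)
  constructor
  · rintro ⟨e, b, he, hei, hb, hbn, heb, rfl⟩
    have hf_eq : f = 1 - e := by
      refine hei.eq_one_sub_of_isNilpotent_mul_of_isUnit_sub hbn heb hfi hc.symm ?_ ?_
      · rwa [hc, mul_assoc, hfi.eq] at hn
      · rwa [hdec, add_sub_cancel_left]
    have hu_eq : u = 2 * e - 1 + b := by
      rw [← add_sub_cancel_left f u, ← hdec, hf_eq]
      noncomm_ring
    have hb_eq : 2 * f - 1 + u = b := by
      rw [hu_eq, hf_eq]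
      noncomm_ring
    exact ⟨hb_eq ▸ hbn, A.mem_one_of_isUnit_of_eq_add hu huu
      (A.two_mul_sub_one_mem_one (A.mem_one_of_isIdempotentElem he hei)) hb hbn hu_eq⟩
  · rintro ⟨hnil, hu1⟩
    have hf1 := A.mem_one_of_isIdempotentElem hf hfi
    have hcomm : Commute f (2 * f - 1 + u) :=
      (((Commute.ofNat_right f 2).mul_right (Commute.refl f)).sub_right
        (Commute.one_right f)).add_right hfu
    refine ⟨1 - f, 2 * f - 1 + u, ⟨1, sub_mem A.one_mem hf1⟩, hfi.one_sub,
      ⟨1, add_mem (A.two_mul_sub_one_mem_one hf1) hu1⟩, hnil,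
      (Commute.one_left _).sub_left hcomm, ?_⟩
    rw [hdec]
    noncomm_ring

/-- Let `a = f + u` be a graded strongly π-regular decomposition of a homogeneous
element `a` (so `f` is a homogeneous idempotent, `u` a homogeneous unit,
`fa = af` and `faf` is nilpotent).  Then `a` is graded strongly nil clean iff
`2f - 1 + u` is nilpotent and `u ∈ R_e`. -/
theorem stmt8 {G : Type*} [Group G] [DecidableEq G] {R : Type*} [Ring R]
    (A : Grading G R) (a f u : R) (ha : A.Homogeneous a)
    (hf : A.Homogeneous f) (hfi : IsIdempotentElem f)
    (hu : A.Homogeneous u) (huu : IsUnit u)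
    (hdec : a = f + u) (hc : f * a = a * f) (hn : IsNilpotent (f * a * f)) :
    A.IsGradedStronglyNilClean a ↔
      (IsNilpotent (2 * f - 1 + u) ∧ u ∈ A.C 1) :=
  stmt8_general A a f u hf hfi hu huu hdec hc hn
end

section
/- Let R be a G-graded ring and I a homogeneous nilpotent ideal of R. Then R is graded strongly nil clean if and only if R/I is graded strongly nil clean. -/
namespace Grading

variable {G : Type*} [Group G] [DecidableEq G] {R : Type*} [Ring R]

/-- A two-sided ideal, viewed as an additive subgroup. -/
def tiAddSubgroup (I : TwoSidedIdeal R) : AddSubgroup R where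
  carrier := I
  add_mem' := fun h1 h2 => I.add_mem h1 h2
  zero_mem' := I.zero_mem
  neg_mem' := fun h => I.neg_mem h

/-- A two-sided ideal is homogeneous if each of its elements lies in the sum of
the intersections `I ∩ R_g`, i.e. `I = ⊕_g (I ∩ R_g)`. -/
def HomogeneousTI (A : Grading G R) (I : TwoSidedIdeal R) : Prop :=
  ∀ a ∈ I, a ∈ ⨆ g : G, (A.C g ⊓ tiAddSubgroup I)

/-- The `g`-component of the quotient grading on `R/I`: the image of `R_g`. -/
def quotC (A : Grading G R) (I : TwoSidedIdeal R) (g : G) :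
    AddSubgroup I.ringCon.Quotient :=
  (A.C g).map (I.ringCon.mk' : R →+* I.ringCon.Quotient).toAddMonoidHom

/-- Homogeneous elements of the quotient graded ring `R/I`. -/
def QuotHomogeneous (A : Grading G R) (I : TwoSidedIdeal R)
    (a : I.ringCon.Quotient) : Prop :=
  ∃ g, a ∈ A.quotC I g

/-- The quotient graded ring `R/I` is graded nil clean. -/
def QuotGradedNilClean (A : Grading G R) (I : TwoSidedIdeal R) : Prop :=
  ∀ a : I.ringCon.Quotient, A.QuotHomogeneous I a →
    ∃ f b : I.ringCon.Quotient, A.QuotHomogeneous I f ∧ IsIdempotentElem f ∧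
      A.QuotHomogeneous I b ∧ IsNilpotent b ∧ a = f + b

/-- A quotient element is graded strongly nil clean. -/
def QuotIsGradedStronglyNilClean (A : Grading G R) (I : TwoSidedIdeal R)
    (a : I.ringCon.Quotient) : Prop :=
  ∃ f b : I.ringCon.Quotient, A.QuotHomogeneous I f ∧ IsIdempotentElem f ∧
    A.QuotHomogeneous I b ∧ IsNilpotent b ∧ f * b = b * f ∧ a = f + b

/-- The quotient graded ring `R/I` is graded strongly nil clean. -/
def QuotGradedStronglyNilClean (A : Grading G R) (I : TwoSidedIdeal R) : Prop :=
  ∀ a : I.ringCon.Quotient, A.QuotHomogeneous I a →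
    A.QuotIsGradedStronglyNilClean I a

/-- The ideal `I` is nilpotent: some power `I^n` vanishes, i.e. every product of
`n` elements of `I` is zero. -/
def NilpotentTI (I : TwoSidedIdeal R) : Prop :=
  ∃ n : ℕ, 0 < n ∧ ∀ x : Fin n → R, (∀ i, x i ∈ I) → (List.ofFn x).prod = 0

end Grading

/-!
In degree `g ≠ 1` a strongly nil clean homogeneous element of `R/I` is nilpotent: a homogeneous
idempotent of degree `h ≠ 1` vanishes since `f = f²` also has degree `h²`, and since `I` is
homogeneous one may compare degree-`g` components of lifts to `R`. Nilpotency lifts along the nil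
ideal `I`. In degree `1`, `a² - a` is nilpotent modulo `I`, hence in `R`, and Newton's method for
`X² - X` in the commutative subring generated by `a` (which lies in `R₁`) yields an idempotent `e`
commuting with `a` with `a - e` nilpotent.
-/

open Polynomial IsMulCommutative in
theorem exists_mem_closure_isIdempotentElem_isNilpotent_sub {R : Type*} [Ring R] {a : R}
    (ha : IsNilpotent (a * a - a)) :
    ∃ e ∈ Subring.closure {a}, IsIdempotentElem e ∧ IsNilpotent (a - e) ∧ Commute a e := by
  have : IsMulCommutative (Subring.closure {a}) := Subring.isMulCommutative_closure (by simp)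
  let x : Subring.closure {a} := ⟨a, Subring.subset_closure rfl⟩
  have hx : IsNilpotent (x ^ 2 - x) := by
    rw [← IsNilpotent.map_iff (Subring.closure {a}).subtype_injective]
    simpa [sq, x] using ha
  have hx' : IsUnit (2 * x - 1) := by
    have : IsUnit ((2 * x - 1) ^ 2) := by
      rw [show (2 * x - 1) ^ 2 = 4 * (x ^ 2 - x) + 1 by ring]
      exact ((Commute.all _ _).isNilpotent_mul_left hx).isUnit_add_one
    exact (isUnit_pow_iff two_ne_zero).mp this
  obtain ⟨r, ⟨hxr, hr⟩, -⟩ := existsUnique_nilpotent_sub_and_aeval_eq_zero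
    (P := (X ^ 2 - X : ℤ[X])) (x := x) (by simpa using hx) (by simpa [map_ofNat] using hx')
  have hrr : r * r = r := by simpa [sq, sub_eq_zero] using hr
  exact ⟨r, r.2, congrArg Subtype.val hrr, hxr.map (Subring.closure {a}).subtype,
    congrArg Subtype.val (mul_comm x r)⟩

theorem isNilpotent_mul_self_sub_of_eq_add {R : Type*} [Ring R] {x f b : R}
    (hf : IsIdempotentElem f) (hb : IsNilpotent b) (hfb : Commute f b) (hx : x = f + b) :
    IsNilpotent (x * x - x) := by
  have hfactor : x * x - x = b * (f + f + b - 1) := by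
    calc x * x - x = (f * f - f) + (f * b - b * f) + b * (f + f + b - 1) := by
          rw [hx]; noncomm_ring
      _ = b * (f + f + b - 1) := by rw [hf.eq, hfb.eq, sub_self, sub_self, zero_add, zero_add]
  have hcomm : Commute b (f + f + b - 1) :=
    ((hfb.symm.add_right hfb.symm).add_right (Commute.refl b)).sub_right (Commute.one_right b)
  rw [hfactor]
  exact hcomm.isNilpotent_mul_right hb

namespace TwoSidedIdeal

variable {R : Type*} [Ring R] (I : TwoSidedIdeal R)

theorem ringCon_mk'_eq_iff {x y : R} : I.ringCon.mk' x = I.ringCon.mk' y ↔ x - y ∈ I :=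
  (RingCon.eq I.ringCon).trans (I.rel_iff x y)

theorem ringCon_mk'_eq_zero_iff {x : R} : I.ringCon.mk' x = 0 ↔ x ∈ I := by
  simpa using I.ringCon_mk'_eq_iff (y := 0)

end TwoSidedIdeal

namespace Grading

variable {G : Type*} [Group G] [DecidableEq G] {R : Type*} [Ring R]

def oneSubring (A : Grading G R) : Subring R where
  carrier := A.C 1
  mul_mem' ha hb := by simpa using A.mul_mem ha hb
  one_mem' := A.one_mem
  add_mem' := add_mem
  zero_mem' := zero_mem _
  neg_mem' := neg_mem

variable {A : Grading G R} {I : TwoSidedIdeal R}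

theorem NilpotentTI.isNilpotent_of_mem (hI : NilpotentTI I) {x : R} (hx : x ∈ I) :
    IsNilpotent x := by
  obtain ⟨n, -, hn⟩ := hI
  refine ⟨n, ?_⟩
  simpa [List.ofFn_const, List.prod_replicate] using hn (fun _ => x) (fun _ => hx)

theorem NilpotentTI.isNilpotent_of_isNilpotent_mk (hI : NilpotentTI I) {x : R}
    (hx : IsNilpotent (I.ringCon.mk' x)) : IsNilpotent x := by
  obtain ⟨m, hm⟩ := hx
  rw [← map_pow, I.ringCon_mk'_eq_zero_iff] at hm
  exact (hI.isNilpotent_of_mem hm).of_pow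

theorem HomogeneousTI.decompose_mem [DirectSum.Decomposition A.C] (hhom : A.HomogeneousTI I)
    {x : R} (hx : x ∈ I) (g : G) : (DirectSum.decompose A.C x g : R) ∈ I := by
  refine AddSubgroup.iSup_induction _ (C := fun y => (DirectSum.decompose A.C y g : R) ∈ I)
    (hhom x hx) (fun h y hy => ?_) (by simp [I.zero_mem]) (fun y z hy hz => ?_)
  · obtain ⟨hyC, hyI⟩ := AddSubgroup.mem_inf.mp hy
    by_cases hhg : h = g
    · subst hhg
      rwa [DirectSum.decompose_of_mem_same _ hyC]
    · rw [DirectSum.decompose_of_mem_ne _ hyC hhg]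
      exact I.zero_mem
  · simpa only [DirectSum.decompose_add, DirectSum.add_apply, AddMemClass.coe_add] using
      I.add_mem hy hz

theorem HomogeneousTI.mem_of_sub_sub_mem (hhom : A.HomogeneousTI I) {x y z : R} {g h k : G}
    (hx : x ∈ A.C g) (hy : y ∈ A.C h) (hz : z ∈ A.C k) (hgh : g ≠ h) (hgk : g ≠ k)
    (hxyz : x - y - z ∈ I) : x ∈ I := by
  let := A.isInternal.chooseDecomposition
  simpa [DirectSum.decompose_of_mem_same _ hx, DirectSum.decompose_of_mem_ne _ hy hgh.symm,
    DirectSum.decompose_of_mem_ne _ hz hgk.symm] using hhom.decompose_mem hxyz g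

theorem HomogeneousTI.mem_of_sub_mem (hhom : A.HomogeneousTI I) {x y : R} {g h : G}
    (hx : x ∈ A.C g) (hy : y ∈ A.C h) (hgh : g ≠ h) (hxy : x - y ∈ I) : x ∈ I :=
  hhom.mem_of_sub_sub_mem hx hy (zero_mem (A.C h)) hgh hgh (by rwa [sub_zero])

theorem HomogeneousTI.mem_of_isIdempotentElem_mk (hhom : A.HomogeneousTI I) {f : R} {h : G}
    (hf : f ∈ A.C h) (hh : h ≠ 1) (hidem : IsIdempotentElem (I.ringCon.mk' f)) : f ∈ I := by
  refine hhom.mem_of_sub_mem hf (A.mul_mem hf hf) (fun h_eq => hh ?_) ?_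
  · simpa using h_eq.symm
  · rw [← I.ringCon_mk'_eq_zero_iff, map_sub, map_mul, hidem.eq, sub_self]

theorem HomogeneousTI.isNilpotent_mk_of_ne_one (hhom : A.HomogeneousTI I) {a : R} {g : G}
    (ha : a ∈ A.C g) (hg : g ≠ 1) (hclean : A.QuotIsGradedStronglyNilClean I (I.ringCon.mk' a)) :
    IsNilpotent (I.ringCon.mk' a) := by
  obtain ⟨fq, bq, ⟨h, hfq⟩, hidem, ⟨k, hbq⟩, hnil, -, heq⟩ := hclean
  obtain ⟨f, hf, rfl⟩ := AddSubgroup.mem_map.mp hfq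
  obtain ⟨b, hb, rfl⟩ := AddSubgroup.mem_map.mp hbq
  change I.ringCon.mk' a = I.ringCon.mk' f + I.ringCon.mk' b at heq
  change IsNilpotent (I.ringCon.mk' b) at hnil
  by_cases hh : h = 1
  · subst hh
    have hdiff : a - f - b ∈ I := by
      rw [← I.ringCon_mk'_eq_zero_iff, map_sub, map_sub, heq, add_sub_cancel_left, sub_self]
    by_cases hk : k = g
    · subst hk
      have hab : a - b ∈ I := hhom.mem_of_sub_mem (sub_mem ha hb) hf hg (by rwa [sub_right_comm])
      rwa [(I.ringCon_mk'_eq_iff).mpr hab]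
    · rw [I.ringCon_mk'_eq_zero_iff.mpr (hhom.mem_of_sub_sub_mem ha hf hb hg (Ne.symm hk) hdiff)]
      exact IsNilpotent.zero
  · rwa [heq, I.ringCon_mk'_eq_zero_iff.mpr (hhom.mem_of_isIdempotentElem_mk hf hh hidem),
      zero_add]

theorem isGradedStronglyNilClean_of_isNilpotent {a : R} (ha : A.Homogeneous a)
    (hnil : IsNilpotent a) : A.IsGradedStronglyNilClean a :=
  ⟨0, a, ⟨1, zero_mem _⟩, .zero, ha, hnil, Commute.zero_left a, (zero_add a).symm⟩

theorem isGradedStronglyNilClean_of_mem_one {a : R} (ha : a ∈ A.C 1)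
    (hnil : IsNilpotent (a * a - a)) : A.IsGradedStronglyNilClean a := by
  obtain ⟨e, he, hidem, hsub, hcomm⟩ := exists_mem_closure_isIdempotentElem_isNilpotent_sub hnil
  have he1 : e ∈ A.C 1 :=
    (Subring.closure_le (t := A.oneSubring)).mpr (Set.singleton_subset_iff.mpr ha) he
  exact ⟨e, a - e, ⟨1, he1⟩, hidem, ⟨1, sub_mem ha he1⟩, hsub, hcomm.symm.sub_right (.refl e),
    (add_sub_cancel e a).symm⟩

theorem Homogeneous.quotMk {a : R} (ha : A.Homogeneous a) (I : TwoSidedIdeal R) :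
    A.QuotHomogeneous I (I.ringCon.mk' a) :=
  let ⟨g, hg⟩ := ha
  ⟨g, AddSubgroup.mem_map_of_mem _ hg⟩

theorem IsGradedStronglyNilClean.quotMk {a : R} (ha : A.IsGradedStronglyNilClean a)
    (I : TwoSidedIdeal R) : A.QuotIsGradedStronglyNilClean I (I.ringCon.mk' a) := by
  obtain ⟨f, b, hf, hidem, hb, hnil, hcomm, rfl⟩ := ha
  exact ⟨_, _, hf.quotMk I, hidem.map _, hb.quotMk I, hnil.map _, Commute.map hcomm _,
    map_add _ f b⟩

theorem GradedStronglyNilClean.quot (hR : A.GradedStronglyNilClean) (I : TwoSidedIdeal R) :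
    A.QuotGradedStronglyNilClean I := by
  rintro _ ⟨g, hx⟩
  obtain ⟨a, ha, rfl⟩ := AddSubgroup.mem_map.mp hx
  exact (hR a ⟨g, ha⟩).quotMk I

theorem GradedStronglyNilClean.of_quot (hhom : A.HomogeneousTI I) (hI : NilpotentTI I)
    (hQ : A.QuotGradedStronglyNilClean I) : A.GradedStronglyNilClean := by
  rintro a ⟨g, ha⟩
  have hclean := hQ _ (Homogeneous.quotMk ⟨g, ha⟩ I)
  by_cases hg : g = 1
  · subst hg
    obtain ⟨f, b, -, hidem, -, hnil, hcomm, heq⟩ := hclean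
    refine isGradedStronglyNilClean_of_mem_one ha (hI.isNilpotent_of_isNilpotent_mk ?_)
    simpa using isNilpotent_mul_self_sub_of_eq_add hidem hnil hcomm heq
  · exact isGradedStronglyNilClean_of_isNilpotent ⟨g, ha⟩
      (hI.isNilpotent_of_isNilpotent_mk (hhom.isNilpotent_mk_of_ne_one ha hg hclean))

end Grading

/-- Let `I` be a homogeneous nilpotent two-sided ideal of a `G`-graded ring `R`.
Then `R` is graded strongly nil clean iff `R/I` is graded strongly nil clean. -/
theorem stmt10 {G : Type*} [Group G] [DecidableEq G] {R : Type*} [Ring R]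
    (A : Grading G R) (I : TwoSidedIdeal R) (hhom : A.HomogeneousTI I)
    (hnilp : Grading.NilpotentTI I) :
    A.GradedStronglyNilClean ↔ A.QuotGradedStronglyNilClean I :=
  ⟨fun hR => hR.quot I, Grading.GradedStronglyNilClean.of_quot hhom hnilp⟩
end
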